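/- (Inner products of derivatives of box splines, Speleers.) Let E = (v₁, …, vₙ) and F = (w₁, …, w_m) be two lists of vectors in ℝ^d with n ≥ d, m ≥ d, such that v₁, …, v_d are linearly independent and w₁, …, w_d are linearly independent, and let m_E = (v₁ + ⋯ + vₙ)/2. Let X be a sublist of E of length r and Y a sublist of F of length s. Assume that M_E is r times continuously differentiable, M_F is s times continuously differentiable, and M_{E++F} is (r+s) times continuously differentiable on ℝ^d. Then for every y ∈ ℝ^d, ∫_{ℝ^d} (D_X M_E)(x) · (D_Y M_F)(x + y) dx = (−1)^r · (D_{X++Y} M_{E++F})(2 m_E + y), where E ++ F and X ++ Y denote concatenation of lists and D_X f denotes the iterated directional derivative of f along the vectors in the list X. -/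

import Mathlib

open MeasureTheory

open scoped Classical in
/-- The box spline `M_{v₁,…,vₙ}` with direction vectors given by the list `v` in `ℝ^d`
(represented as `Fin d → ℝ`), defined recursively: when the list has length `≤ d`
(base case, length `= d` in intended use) it is the normalized indicator of the
parallelepiped spanned by the first `d` vectors, scaled by `1/|det[v₁ ⋯ v_d]|`;
otherwise one integrates out the last direction vector over `[0,1]`. -/
noncomputable def boxSpline (d : ℕ) (v : List (Fin d → ℝ)) : (Fin d → ℝ) → ℝ :=
  if _h : v.length ≤ d then
    fun x =>
      if ∃ t : Fin d → ℝ, (∀ k, t k ∈ Set.Icc (0 : ℝ) 1) ∧ x = ∑ k, t k • v.getD k.val 0 then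
        |Matrix.det (Matrix.of fun i j : Fin d => v.getD j.val 0 i)|⁻¹
      else 0
  else
    fun x => ∫ t in (0 : ℝ)..1, boxSpline d v.dropLast (x - t • v.getLastD 0)
termination_by v.length
decreasing_by
  simp only [List.length_dropLast]
  omega

/-- The directional derivative `D_u f` : the derivative at `s = 0` of `s ↦ f (x + s u)`. -/
noncomputable def dirDeriv (d : ℕ) (u : Fin d → ℝ) (f : (Fin d → ℝ) → ℝ) :
    (Fin d → ℝ) → ℝ :=
  fun x => deriv (fun s : ℝ => f (x + s • u)) 0

/-- Iterated directional derivative along a list of vectors: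
`D_{(u₁,…,u_r)} f = D_{u₁} ⋯ D_{u_r} f`. -/
noncomputable def dirDerivList (d : ℕ) (X : List (Fin d → ℝ)) (f : (Fin d → ℝ) → ℝ) :
    (Fin d → ℝ) → ℝ :=
  X.foldr (dirDeriv d) f

/-!
With `S = v₁ + ⋯ + vₙ`, the key identity is `∫ M_E(x) M_F(x + z) dx = M_{E++F}(S + z)`. Split `F`
into its first `d` vectors and the rest. For the first `d` vectors, the linear change of variables
taking the unit cube onto their parallelepiped turns the integral into the cube average of
`M_E(A t − z)`; the central symmetry `M_E(S − x) = M_E(x)` rewrites this as the cube average of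
`M_E(S + z − A t)`, which unwinding the defining recursion identifies with `M_{E++F}(S + z)`. The
remaining vectors of `F` are averaged out in the same way on both sides (Fubini).

Directional derivatives pass through the correlation `∫ A(x) B(x + z) dx`: onto `B` by
differentiating under the integral, and onto `A` with a sign change, because the correlation also
equals `∫ B(x) A(x − z) dx`. Moving `D_X` off `M_E` and `D_Y` off `M_F` gives the factor `(−1)^r`
and the point `S + y = 2 m_E + y`.
-/

open Set

theorem isCompact_parallelepiped {ι E : Type*} [Fintype ι] [AddCommGroup E] [Module ℝ E]
    [TopologicalSpace E] [IsTopologicalAddGroup E] [ContinuousSMul ℝ E] (v : ι → E) :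
    IsCompact (parallelepiped v) :=
  isCompact_Icc.image (by fun_prop)

theorem sum_sub_mem_parallelepiped {ι E : Type*} [Fintype ι] [AddCommGroup E] [Module ℝ E]
    (v : ι → E) {x : E} (hx : x ∈ parallelepiped v) : ∑ i, v i - x ∈ parallelepiped v := by
  obtain ⟨t, ⟨ht0, ht1⟩, rfl⟩ := (mem_parallelepiped_iff v x).1 hx
  refine (mem_parallelepiped_iff v _).2 ⟨1 - t, ⟨sub_nonneg.2 ht1, sub_le_self _ ht0⟩, ?_⟩
  simp [sub_smul, Finset.sum_sub_distrib]

theorem sum_sub_mem_parallelepiped_iff {ι E : Type*} [Fintype ι] [AddCommGroup E] [Module ℝ E]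
    (v : ι → E) {x : E} : ∑ i, v i - x ∈ parallelepiped v ↔ x ∈ parallelepiped v :=
  ⟨fun hx => sub_sub_cancel (∑ i, v i) x ▸ sum_sub_mem_parallelepiped v hx,
    sum_sub_mem_parallelepiped v⟩

theorem List.eq_ofFn_getD_append_drop {α : Type*} {l : List α} {n : ℕ} (h : n ≤ l.length)
    (a : α) : l = List.ofFn (fun i : Fin n => l.getD i a) ++ l.drop n := by
  conv_lhs => rw [← List.take_append_drop n l]
  congr 1
  apply List.ext_getElem (by simpa using h)
  intro i h₁ h₂
  simp only [List.getElem_take, List.getElem_ofFn]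
  rw [List.getD_eq_getElem]

theorem det_fintypeLinearCombination {R ι : Type*} [CommRing R] [Fintype ι] [DecidableEq ι]
    (v : ι → ι → R) :
    LinearMap.det (Fintype.linearCombination R v) = (Matrix.of fun i j => v j i).det := by
  rw [← LinearMap.det_toMatrix']
  congr 1
  ext i j
  simp [Fintype.linearCombination_apply_single]

variable {d : ℕ}

theorem boxSpline_of_length_le {v : List (Fin d → ℝ)} (h : v.length ≤ d) :
    boxSpline d v = (parallelepiped fun i : Fin d => v.getD i 0).indicator
      fun _ => |(Matrix.of fun i j : Fin d => v.getD j 0 i).det|⁻¹ := by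
  classical
  ext x
  rw [boxSpline, dif_pos h]
  simp only [indicator_apply, mem_parallelepiped_iff, mem_Icc, Pi.le_def, Pi.zero_apply,
    Pi.one_apply, forall_and]

theorem boxSpline_of_length_gt {v : List (Fin d → ℝ)} (h : d < v.length) :
    boxSpline d v = fun x => ∫ t in (0 : ℝ)..1, boxSpline d v.dropLast (x - t • v.getLastD 0) := by
  rw [boxSpline, dif_neg (not_le.2 h)]

theorem boxSpline_ofFn (v : Fin d → Fin d → ℝ) :
    boxSpline d (List.ofFn v) =
      (parallelepiped v).indicator fun _ => |(Matrix.of fun i j => v j i).det|⁻¹ := by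
  have hv (i : Fin d) : (List.ofFn v).getD i 0 = v i := by
    rw [List.getD_eq_getElem _ _ (by simp), List.getElem_ofFn]
  simp only [boxSpline_of_length_le (List.length_ofFn.le), hv]

theorem boxSpline_append_singleton {W : List (Fin d → ℝ)} (hW : d ≤ W.length) (w : Fin d → ℝ) :
    boxSpline d (W ++ [w]) = fun x => ∫ t in (0 : ℝ)..1, boxSpline d W (x - t • w) := by
  rw [boxSpline_of_length_gt (by simp; omega), List.dropLast_concat, List.getLastD_concat]

theorem boxSpline_induction {P : ((Fin d → ℝ) → ℝ) → Prop}
    (hbase : ∀ (v : Fin d → Fin d → ℝ) (c : ℝ), P ((parallelepiped v).indicator fun _ => c))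
    (hsmear : ∀ f w, P f → P fun x => ∫ t in (0 : ℝ)..1, f (x - t • w)) (v : List (Fin d → ℝ)) :
    P (boxSpline d v) := by
  by_cases h : v.length ≤ d
  · rw [boxSpline_of_length_le h]
    apply hbase
  · rw [boxSpline_of_length_gt (not_le.1 h)]
    exact hsmear _ _ (boxSpline_induction hbase hsmear v.dropLast)
termination_by v.length
decreasing_by simp only [List.length_dropLast]; omega

theorem measurable_boxSpline (v : List (Fin d → ℝ)) : Measurable (boxSpline d v) := by
  refine boxSpline_induction (fun v c => ?_) (fun f w hf => ?_) v
  · exact measurable_const.indicator (isCompact_parallelepiped v).isClosed.measurableSet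
  · have : StronglyMeasurable fun p : (Fin d → ℝ) × ℝ => f (p.1 - p.2 • w) :=
      (hf.comp (by fun_prop)).stronglyMeasurable
    simp_rw [intervalIntegral.integral_of_le zero_le_one]
    exact this.integral_prod_right'.measurable

theorem exists_abs_boxSpline_le (v : List (Fin d → ℝ)) : ∃ C, ∀ x, |boxSpline d v x| ≤ C := by
  refine boxSpline_induction (P := fun f => ∃ C, ∀ x, |f x| ≤ C)
    (fun v c => ⟨|c|, fun x => ?_⟩) (fun f w ⟨C, hC⟩ => ⟨C, fun x => ?_⟩) v
  · by_cases hx : x ∈ parallelepiped v <;> simp [hx]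
  · simpa using intervalIntegral.norm_integral_le_of_norm_le_const (a := 0) (b := 1)
      (f := fun t => f (x - t • w)) fun t _ => hC (x - t • w)

theorem hasCompactSupport_boxSpline (v : List (Fin d → ℝ)) : HasCompactSupport (boxSpline d v) := by
  refine boxSpline_induction (fun v c => ?_) (fun f w hf => ?_) v
  · exact HasCompactSupport.intro (isCompact_parallelepiped v)
      fun x hx => indicator_of_notMem hx _
  · have hseg : IsCompact ((fun t : ℝ => t • w) '' Icc 0 1) := isCompact_Icc.image (by fun_prop)
    refine HasCompactSupport.intro (hf.isCompact.add hseg) fun x hx => ?_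
    refine intervalIntegral.integral_congr (g := 0) (fun t ht => ?_) |>.trans (by simp)
    rw [uIcc_of_le zero_le_one] at ht
    refine image_eq_zero_of_notMem_tsupport fun hxt => hx ?_
    exact ⟨_, hxt, t • w, mem_image_of_mem _ ht, sub_add_cancel x _⟩

theorem integrable_boxSpline (v : List (Fin d → ℝ)) : Integrable (boxSpline d v) := by
  obtain ⟨C, hC⟩ := exists_abs_boxSpline_le v
  have hK := (hasCompactSupport_boxSpline v).isCompact
  refine (integrableOn_iff_integrable_of_support_subset (subset_tsupport _)).1 ?_
  exact Measure.integrableOn_of_bounded hK.measure_lt_top.ne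
    (measurable_boxSpline v).aestronglyMeasurable (M := C) (ae_of_all _ hC)

noncomputable def unitCubeMeasure (n : ℕ) : Measure (Fin n → ℝ) :=
  Measure.pi fun _ => volume.restrict (Icc 0 1)

theorem unitCubeMeasure_eq_restrict (n : ℕ) :
    unitCubeMeasure n = volume.restrict (Icc 0 1) := by
  rw [unitCubeMeasure, ← pi_univ_Icc, volume_pi, Measure.restrict_pi_pi]
  rfl

instance (n : ℕ) : IsProbabilityMeasure (unitCubeMeasure n) :=
  ⟨by simp [unitCubeMeasure_eq_restrict, Real.volume_Icc_pi]⟩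

theorem integral_unitCubeMeasure_succ {n : ℕ} {g : (Fin (n + 1) → ℝ) → ℝ}
    (hg : Integrable g (unitCubeMeasure (n + 1))) :
    ∫ t, g t ∂unitCubeMeasure (n + 1) =
      ∫ s in (0 : ℝ)..1, ∫ t, g (Fin.snoc t s) ∂unitCubeMeasure n := by
  set e := (MeasurableEquiv.piFinSuccAbove (fun _ : Fin (n + 1) => ℝ) (Fin.last n)).symm
  have he : MeasurePreserving e _ _ := (measurePreserving_piFinSuccAbove
    (fun _ : Fin (n + 1) => volume.restrict (Icc (0 : ℝ) 1)) (Fin.last n)).symm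
  have hg' : Integrable (fun p => g (e p)) _ :=
    (he.integrable_comp_emb e.measurableEmbedding).2 hg
  rw [unitCubeMeasure, ← he.integral_comp', integral_prod _ hg',
    intervalIntegral.integral_of_le zero_le_one, setIntegral_congr_set Ioc_ae_eq_Icc]
  have he_apply (s : ℝ) (t : Fin n → ℝ) : e (s, t) = Fin.snoc t s := Fin.insertNth_last' s t
  simp only [he_apply, unitCubeMeasure]

theorem boxSpline_append_ofFn {W : List (Fin d → ℝ)} (hW : d ≤ W.length) {n : ℕ}
    (u : Fin n → Fin d → ℝ) (x : Fin d → ℝ) :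
    boxSpline d (W ++ List.ofFn u) x =
      ∫ t, boxSpline d W (x - ∑ i, t i • u i) ∂unitCubeMeasure n := by
  induction n generalizing x with
  | zero => simp
  | succ n ih =>
    obtain ⟨C, hC⟩ := exists_abs_boxSpline_le W
    have hint : Integrable (fun t => boxSpline d W (x - ∑ i, t i • u i)) (unitCubeMeasure _) :=
      .of_bound ((measurable_boxSpline W).comp (by fun_prop)).aestronglyMeasurable C
        (ae_of_all _ fun t => hC _)
    rw [List.ofFn_succ', List.concat_eq_append, ← List.append_assoc,
      boxSpline_append_singleton (by simp; omega), integral_unitCubeMeasure_succ hint]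
    simp only [ih, Fin.sum_univ_castSucc, Fin.snoc_castSucc, Fin.snoc_last, sub_add_eq_sub_sub_swap]

theorem boxSpline_sum_sub {E : List (Fin d → ℝ)} (hE : d ≤ E.length) (x : Fin d → ℝ) :
    boxSpline d E (E.sum - x) = boxSpline d E x := by
  obtain ⟨v, U, rfl⟩ : ∃ v U, E = List.ofFn v ++ U := ⟨_, _, List.eq_ofFn_getD_append_drop hE 0⟩
  clear hE
  induction U using List.reverseRecOn generalizing x with
  | nil =>
    classical
    simp only [List.append_nil, boxSpline_ofFn, List.sum_ofFn, indicator_apply,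
      sum_sub_mem_parallelepiped_iff]
  | append_singleton U w ih =>
    rw [← List.append_assoc, boxSpline_append_singleton (by simp), List.sum_append,
      List.sum_singleton]
    calc ∫ t in (0 : ℝ)..1, boxSpline d (List.ofFn v ++ U) ((List.ofFn v ++ U).sum + w - x - t • w)
        = ∫ t in (0 : ℝ)..1, boxSpline d (List.ofFn v ++ U) (x - (1 - t) • w) := by
          congr! 2 with t
          rw [← ih]
          congr 1
          module
      _ = ∫ t in (0 : ℝ)..1, boxSpline d (List.ofFn v ++ U) (x - t • w) := by
          simpa using intervalIntegral.integral_comp_sub_left (a := 0) (b := 1)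
            (fun t => boxSpline d (List.ofFn v ++ U) (x - t • w)) 1

theorem integral_mul_boxSpline_ofFn {v : Fin d → Fin d → ℝ} (hv : LinearIndependent ℝ v)
    (g : (Fin d → ℝ) → ℝ) (z : Fin d → ℝ) :
    ∫ x, g x * boxSpline d (List.ofFn v) (x + z) =
      ∫ t, g (∑ i, t i • v i - z) ∂unitCubeMeasure d := by
  set A := (Fintype.linearCombination ℝ v).toContinuousLinearMap
  have hA (t : Fin d → ℝ) : A t = ∑ i, t i • v i := Fintype.linearCombination_apply ℝ v t
  have hA_inj : Function.Injective A := hv.fintypeLinearCombination_injective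
  have hdet : A.det = (Matrix.of fun i j => v j i).det := by
    rw [LinearMap.det_toContinuousLinearMap, det_fintypeLinearCombination]
  have hdet_ne : A.det ≠ 0 := by
    rw [LinearMap.det_toContinuousLinearMap]
    refine (LinearMap.isUnit_det _ ?_).ne_zero
    exact (LinearMap.isUnit_iff_ker_eq_bot _).2 (LinearMap.ker_eq_bot.2 hA_inj)
  have himage : parallelepiped v = A '' Icc 0 1 := by
    simp only [parallelepiped, hA]
  calc ∫ x, g x * boxSpline d (List.ofFn v) (x + z)
      = ∫ x, g (x - z) * boxSpline d (List.ofFn v) x := by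
        simpa using integral_add_right_eq_self (fun x => g (x - z) * boxSpline d (List.ofFn v) x) z
    _ = ∫ x in parallelepiped v, |A.det|⁻¹ * g (x - z) := by
        rw [boxSpline_ofFn, ← hdet,
          ← integral_indicator (isCompact_parallelepiped v).isClosed.measurableSet]
        congr 1 with x
        by_cases hx : x ∈ parallelepiped v <;> simp [hx, mul_comm]
    _ = ∫ t in Icc 0 1, |A.det| • (|A.det|⁻¹ * g (A t - z)) := by
        rw [himage]
        exact integral_image_eq_integral_abs_det_fderiv_smul volume measurableSet_Icc
          (fun t _ => A.hasFDerivAt.hasFDerivWithinAt) hA_inj.injOn _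
    _ = ∫ t, g (∑ i, t i • v i - z) ∂unitCubeMeasure d := by
        rw [unitCubeMeasure_eq_restrict]
        congr 1 with t
        rw [smul_eq_mul, ← mul_assoc, mul_inv_cancel₀ (abs_ne_zero.2 hdet_ne), one_mul, hA]

theorem integral_boxSpline_mul_boxSpline {E F : List (Fin d → ℝ)} (hE : d ≤ E.length)
    (hF : d ≤ F.length) (hliF : LinearIndependent ℝ fun i : Fin d => F.getD i 0)
    (z : Fin d → ℝ) :
    ∫ x, boxSpline d E x * boxSpline d F (x + z) = boxSpline d (E ++ F) (E.sum + z) := by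
  set v := fun i : Fin d => F.getD i 0
  set u := fun i : Fin (F.drop d).length => (F.drop d)[i]
  have hF' : F = List.ofFn v ++ List.ofFn u := by
    rw [show List.ofFn u = F.drop d from List.ofFn_getElem]
    exact List.eq_ofFn_getD_append_drop hF 0
  have hbase (y : Fin d → ℝ) :
      ∫ x, boxSpline d E x * boxSpline d (List.ofFn v) (x + y) =
        boxSpline d (E ++ List.ofFn v) (E.sum + y) := by
    rw [integral_mul_boxSpline_ofFn hliF, boxSpline_append_ofFn hE]
    congr 1 with t
    rw [← boxSpline_sum_sub hE]
    congr 1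
    abel
  have hint : Integrable (Function.uncurry fun x (t : Fin (F.drop d).length → ℝ) =>
      boxSpline d E x * boxSpline d (List.ofFn v) (x + (z - ∑ i, t i • u i)))
      (volume.prod (unitCubeMeasure _)) := by
    obtain ⟨C, hC⟩ := exists_abs_boxSpline_le (List.ofFn v)
    exact ((integrable_boxSpline E).comp_fst _).mul_bdd
      ((measurable_boxSpline _).comp (by fun_prop)).aestronglyMeasurable (ae_of_all _ fun _ => hC _)
  rw [hF', ← List.append_assoc]
  calc ∫ x, boxSpline d E x * boxSpline d (List.ofFn v ++ List.ofFn u) (x + z)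
      = ∫ x, ∫ t, boxSpline d E x * boxSpline d (List.ofFn v) (x + (z - ∑ i, t i • u i))
          ∂unitCubeMeasure _ := by
        congr 1 with x
        rw [boxSpline_append_ofFn (by simp), ← integral_const_mul]
        simp only [add_sub_assoc]
    _ = ∫ t, boxSpline d (E ++ List.ofFn v) (E.sum + z - ∑ i, t i • u i) ∂unitCubeMeasure _ := by
        rw [integral_integral_swap hint]
        simp only [hbase, add_sub_assoc]
    _ = boxSpline d (E ++ List.ofFn v ++ List.ofFn u) (E.sum + z) :=
        (boxSpline_append_ofFn (by simp) u _).symm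

theorem dirDeriv_apply_eq_fderiv {u : Fin d → ℝ} {f : (Fin d → ℝ) → ℝ} {x : Fin d → ℝ}
    (hf : DifferentiableAt ℝ f x) : dirDeriv d u f x = fderiv ℝ f x u :=
  hf.lineDeriv_eq_fderiv

theorem dirDeriv_comp_neg (u : Fin d → ℝ) (f : (Fin d → ℝ) → ℝ) (x : Fin d → ℝ) :
    dirDeriv d u (fun y => f (-y)) x = dirDeriv d (-u) f (-x) := by
  simp only [dirDeriv, neg_add, smul_neg]

theorem dirDeriv_comp_add_left (u : Fin d → ℝ) (f : (Fin d → ℝ) → ℝ) (c : Fin d → ℝ) :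
    dirDeriv d u (fun y => f (c + y)) = fun y => dirDeriv d u f (c + y) := by
  ext y
  simp only [dirDeriv, add_assoc]

theorem dirDeriv_const_smul (u : Fin d → ℝ) (c : ℝ) (f : (Fin d → ℝ) → ℝ) :
    dirDeriv d u (c • f) = c • dirDeriv d u f := by
  ext x
  exact congrFun (deriv_const_mul_field' (v := fun s => f (x + s • u)) c) 0

theorem contDiff_dirDeriv {n : ℕ} (u : Fin d → ℝ) {f : (Fin d → ℝ) → ℝ}
    (hf : ContDiff ℝ (n + 1 : ℕ) f) : ContDiff ℝ n (dirDeriv d u f) := by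
  have hdiff : Differentiable ℝ f := hf.differentiable (by simp)
  have : dirDeriv d u f = fun x => fderiv ℝ f x u :=
    funext fun x => dirDeriv_apply_eq_fderiv (hdiff x)
  rw [this]
  exact (hf.fderiv_right (by norm_cast)).clm_apply contDiff_const

theorem HasCompactSupport.dirDeriv (u : Fin d → ℝ) {f : (Fin d → ℝ) → ℝ}
    (hf : HasCompactSupport f) : HasCompactSupport (dirDeriv d u f) := by
  refine hf.mono' fun x hx => ?_
  by_contra hxf
  refine hx ((notMem_tsupport_iff_eventuallyEq.1 hxf).lineDeriv_eq.trans ?_)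
  simp [lineDeriv]

theorem dirDerivList_append (X Y : List (Fin d → ℝ)) (f : (Fin d → ℝ) → ℝ) :
    dirDerivList d (X ++ Y) f = dirDerivList d X (dirDerivList d Y f) :=
  List.foldr_append ..

theorem contDiff_dirDerivList (X : List (Fin d → ℝ)) {n : ℕ} {f : (Fin d → ℝ) → ℝ}
    (hf : ContDiff ℝ (X.length + n : ℕ) f) : ContDiff ℝ n (dirDerivList d X f) := by
  induction X generalizing n with
  | nil => simpa [dirDerivList] using hf
  | cons u X ih =>
    exact contDiff_dirDeriv u (ih (by simpa [add_assoc, add_comm 1] using hf))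

theorem HasCompactSupport.dirDerivList (X : List (Fin d → ℝ)) {f : (Fin d → ℝ) → ℝ}
    (hf : HasCompactSupport f) : HasCompactSupport (dirDerivList d X f) := by
  induction X with
  | nil => exact hf
  | cons u X ih => exact ih.dirDeriv u

theorem dirDerivList_comp_add_left (X : List (Fin d → ℝ)) (f : (Fin d → ℝ) → ℝ)
    (c : Fin d → ℝ) :
    dirDerivList d X (fun y => f (c + y)) = fun y => dirDerivList d X f (c + y) := by
  induction X with
  | nil => rfl
  | cons u X ih => exact (congrArg (dirDeriv d u) ih).trans (dirDeriv_comp_add_left u _ c)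

noncomputable def correlation (A B : (Fin d → ℝ) → ℝ) (z : Fin d → ℝ) : ℝ :=
  ∫ x, A x * B (x + z)

theorem correlation_eq_convolution (A B : (Fin d → ℝ) → ℝ) :
    correlation A B = convolution (fun x => A (-x)) B (ContinuousLinearMap.mul ℝ ℝ) volume := by
  ext z
  rw [convolution_def, correlation, ← integral_neg_eq_self]
  simp [sub_eq_add_neg, add_comm]

theorem correlation_flip (A B : (Fin d → ℝ) → ℝ) (z : Fin d → ℝ) :
    correlation A B z = correlation B A (-z) := by
  rw [correlation, correlation, ← integral_add_right_eq_self (fun y => B y * A (y + -z)) z]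
  simp [mul_comm]

theorem dirDeriv_correlation_right {A B : (Fin d → ℝ) → ℝ} (hA : Continuous A)
    (hB : ContDiff ℝ 1 B) (hBc : HasCompactSupport B) (u : Fin d → ℝ) :
    dirDeriv d u (correlation A B) = correlation A (dirDeriv d u B) := by
  ext z
  have hloc : LocallyIntegrable (fun x => A (-x)) := (hA.comp continuous_neg).locallyIntegrable
  have hfd := hBc.hasFDerivAt_convolution_right (ContinuousLinearMap.mul ℝ ℝ) hloc hB z
  have hdB : dirDeriv d u B = fun x => fderiv ℝ B x u :=
    funext fun x => dirDeriv_apply_eq_fderiv (hB.differentiable one_ne_zero x)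
  rw [correlation_eq_convolution, correlation_eq_convolution,
    dirDeriv_apply_eq_fderiv hfd.differentiableAt, hfd.fderiv,
    convolution_precompR_apply _ hloc (hBc.fderiv ℝ) (hB.continuous_fderiv one_ne_zero), hdB]

theorem dirDeriv_correlation_left {A B : (Fin d → ℝ) → ℝ} (hA : ContDiff ℝ 1 A)
    (hAc : HasCompactSupport A) (hB : Continuous B) (u : Fin d → ℝ) :
    dirDeriv d u (correlation A B) = -correlation (dirDeriv d u A) B := by
  have hdA (v : Fin d → ℝ) (x : Fin d → ℝ) : dirDeriv d v A x = fderiv ℝ A x v :=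
    dirDeriv_apply_eq_fderiv (hA.differentiable one_ne_zero x)
  ext z
  rw [funext (correlation_flip A B), dirDeriv_comp_neg, dirDeriv_correlation_right hB hA hAc,
    Pi.neg_apply, correlation_flip (dirDeriv d u A)]
  simp only [correlation, hdA, map_neg, mul_neg, integral_neg]

theorem dirDerivList_correlation_right (Y : List (Fin d → ℝ)) {A B : (Fin d → ℝ) → ℝ}
    (hA : Continuous A) (hB : ContDiff ℝ Y.length B) (hBc : HasCompactSupport B) :
    dirDerivList d Y (correlation A B) = correlation A (dirDerivList d Y B) := by
  induction Y with
  | nil => rfl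
  | cons u Y ih =>
    have hYB : ContDiff ℝ (0 + 1 : ℕ) (dirDerivList d Y B) :=
      contDiff_dirDerivList Y (by simpa [add_comm 1] using hB)
    exact (congrArg (dirDeriv d u) (ih (hB.of_le (by simp)))).trans
      (dirDeriv_correlation_right hA (by simpa using hYB) (hBc.dirDerivList Y) u)

theorem dirDerivList_correlation_left (X : List (Fin d → ℝ)) {A B : (Fin d → ℝ) → ℝ}
    (hA : ContDiff ℝ X.length A) (hAc : HasCompactSupport A) (hB : Continuous B) :
    dirDerivList d X (correlation A B) =
      (-1 : ℝ) ^ X.length • correlation (dirDerivList d X A) B := by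
  induction X with
  | nil => simp [dirDerivList]
  | cons u X ih =>
    have hXA : ContDiff ℝ (0 + 1 : ℕ) (dirDerivList d X A) :=
      contDiff_dirDerivList X (by simpa [add_comm 1] using hA)
    change dirDeriv d u (dirDerivList d X (correlation A B)) = _
    rw [ih (hA.of_le (by simp)), dirDeriv_const_smul,
      dirDeriv_correlation_left (by simpa using hXA) (hAc.dirDerivList X) hB u]
    simp [pow_succ, dirDerivList]

theorem boxSpline_deriv_inner_product_general
    (d : ℕ)
    (E F : List (Fin d → ℝ)) (hE : d ≤ E.length) (hF : d ≤ F.length)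
    (hliF : LinearIndependent ℝ (fun i : Fin d => F.getD i.val 0))
    (X Y : List (Fin d → ℝ))
    (r s : ℕ) (hr : X.length = r) (hs : Y.length = s)
    (hsmE : ContDiff ℝ (r : ℕ∞) (boxSpline d E))
    (hsmF : ContDiff ℝ (s : ℕ∞) (boxSpline d F))
    (mE : Fin d → ℝ) (hmE : mE = (2 : ℝ)⁻¹ • E.sum) :
    ∀ y : Fin d → ℝ,
      ∫ x, dirDerivList d X (boxSpline d E) x * dirDerivList d Y (boxSpline d F) (x + y) =
        (-1 : ℝ) ^ r *
          dirDerivList d (X ++ Y) (boxSpline d (E ++ F)) ((2 : ℝ) • mE + y) := by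
  subst hr hs hmE
  intro y
  have hDYF : Continuous (dirDerivList d Y (boxSpline d F)) :=
    (contDiff_dirDerivList Y (n := 0) (by simpa using hsmF)).continuous
  have hcorr : correlation (boxSpline d E) (boxSpline d F) =
      fun z => boxSpline d (E ++ F) (E.sum + z) :=
    funext (integral_boxSpline_mul_boxSpline hE hF hliF)
  calc correlation (dirDerivList d X (boxSpline d E)) (dirDerivList d Y (boxSpline d F)) y
      = (-1 : ℝ) ^ X.length *
          dirDerivList d X (correlation (boxSpline d E) (dirDerivList d Y (boxSpline d F))) y := by
        rw [dirDerivList_correlation_left X hsmE (hasCompactSupport_boxSpline E) hDYF,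
          Pi.smul_apply, smul_eq_mul, ← mul_assoc, ← pow_add, Even.neg_one_pow ⟨_, rfl⟩, one_mul]
    _ = _ := by
        rw [← dirDerivList_correlation_right Y hsmE.continuous hsmF (hasCompactSupport_boxSpline F),
          ← dirDerivList_append, hcorr, dirDerivList_comp_add_left, smul_inv_smul₀ two_ne_zero]

/-- Speleers: inner products of derivatives of box splines. For sublists
`X ⊆ E` of length `r` and `Y ⊆ F` of length `s`, with the relevant smoothness,
`∫ (D_X M_E)(x) (D_Y M_F)(x + y) dx = (−1)^r (D_{X++Y} M_{E++F})(2 m_E + y)` for all `y`. -/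
theorem boxSpline_deriv_inner_product
    (d : ℕ) (hd : 1 ≤ d)
    (E F : List (Fin d → ℝ)) (hE : d ≤ E.length) (hF : d ≤ F.length)
    (hliE : LinearIndependent ℝ (fun i : Fin d => E.getD i.val 0))
    (hliF : LinearIndependent ℝ (fun i : Fin d => F.getD i.val 0))
    (X Y : List (Fin d → ℝ)) (hX : X.Sublist E) (hY : Y.Sublist F)
    (r s : ℕ) (hr : X.length = r) (hs : Y.length = s)
    (hsmE : ContDiff ℝ (r : ℕ∞) (boxSpline d E))
    (hsmF : ContDiff ℝ (s : ℕ∞) (boxSpline d F))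
    (hsmEF : ContDiff ℝ ((r + s : ℕ) : ℕ∞) (boxSpline d (E ++ F)))
    (mE : Fin d → ℝ) (hmE : mE = (2 : ℝ)⁻¹ • E.sum) :
    ∀ y : Fin d → ℝ,
      ∫ x, dirDerivList d X (boxSpline d E) x * dirDerivList d Y (boxSpline d F) (x + y) =
        (-1 : ℝ) ^ r *
          dirDerivList d (X ++ Y) (boxSpline d (E ++ F)) ((2 : ℝ) • mE + y) :=
  boxSpline_deriv_inner_product_general d E F hE hF hliF X Y r s hr hs hsmE hsmF mE hmE
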